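/- arXiv:0706.0088 — 4 statements merged into one kernel-verified Lean document; each statement's English description precedes it below -/
import Mathlib

section
/- Let φ = (1+√5)/2 and let a = (0, φ, 1). For any v ∈ R^3 with (v,a) = 0, the polynomial h(x) = (v,x)((a,x)^2 - (1/5)(a,a)(x,x)) vanishes at all twelve vertices of the standard icosahedron (0,±φ,±1), (±1,0,±φ), (±φ,±1,0). -/
/-!
The factor `(v, x)` kills the two vertices `±a`. Every other vertex `x` has `|x| = |a|` and
`(a, x) = ±φ`, and `|a|² = φ + 2` with `(φ + 2)² = 5φ²` by `φ² = φ + 1`; hence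
`(a, x)² = (1/5)(a, a)(x, x)` and the quadratic factor vanishes.
-/

open Matrix Real

noncomputable def icosahedralCubic {n : Type*} [Fintype n] (a v x : n → ℝ) : ℝ :=
  (v ⬝ᵥ x) * ((a ⬝ᵥ x) ^ 2 - (1/5) * (a ⬝ᵥ a) * (x ⬝ᵥ x))

section Cubic

variable {n : Type*} [Fintype n] {a v x : n → ℝ}

theorem icosahedralCubic_eq_zero_of_five_mul_sq
    (hx : 5 * (a ⬝ᵥ x) ^ 2 = (a ⬝ᵥ a) * (x ⬝ᵥ x)) : icosahedralCubic a v x = 0 := by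
  rw [icosahedralCubic]
  linear_combination (v ⬝ᵥ x / 5) * hx

theorem icosahedralCubic_smul_eq_zero (hv : v ⬝ᵥ a = 0) (c : ℝ) :
    icosahedralCubic a v (c • a) = 0 := by
  rw [icosahedralCubic, dotProduct_smul, hv, smul_zero, zero_mul]

end Cubic

section Icosahedron

variable {t ε η : ℝ} (ht : t ^ 2 = t + 1) {v : Fin 3 → ℝ}
include ht

theorem five_mul_sq_dotProduct_eq {x : Fin 3 → ℝ}
    (hxx : x ⬝ᵥ x = t ^ 2 + 1) (hax : (![0, t, 1] ⬝ᵥ x) ^ 2 = t ^ 2) :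
    5 * (![0, t, 1] ⬝ᵥ x) ^ 2 = (![0, t, 1] ⬝ᵥ ![0, t, 1]) * (x ⬝ᵥ x) := by
  rw [hxx, hax, dotProduct, Fin.sum_univ_three]
  simp only [cons_val_zero, cons_val_one, cons_val_two, head_cons, tail_cons]
  linear_combination -(t ^ 2 + t - 1) * ht

variable (hε : ε ^ 2 = 1) (hη : η ^ 2 = 1)
include hε hη

theorem icosahedralCubic_vertex_yz_eq_zero (hv : v ⬝ᵥ ![0, t, 1] = 0) :
    icosahedralCubic ![0, t, 1] v ![0, ε * t, η] = 0 := by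
  rcases sq_eq_sq_iff_eq_or_eq_neg.mp (hε.trans hη.symm) with rfl | rfl
  · have hx : ![0, ε * t, ε] = ε • ![0, t, 1] := by
      ext i; fin_cases i <;> simp
    rw [hx]
    exact icosahedralCubic_smul_eq_zero hv ε
  · apply icosahedralCubic_eq_zero_of_five_mul_sq
    apply five_mul_sq_dotProduct_eq ht <;>
      simp only [dotProduct, Fin.sum_univ_three, cons_val_zero, cons_val_one, cons_val_two,
        head_cons, tail_cons]
    · linear_combination t ^ 2 * hε + hη
    · linear_combination η ^ 2 * (t ^ 2 + t - 1) * ht + t ^ 2 * hη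

theorem icosahedralCubic_vertex_xz_eq_zero :
    icosahedralCubic ![0, t, 1] v ![ε, 0, η * t] = 0 := by
  apply icosahedralCubic_eq_zero_of_five_mul_sq
  apply five_mul_sq_dotProduct_eq ht <;>
    simp only [dotProduct, Fin.sum_univ_three, cons_val_zero, cons_val_one, cons_val_two,
      head_cons, tail_cons]
  · linear_combination hε + t ^ 2 * hη
  · linear_combination t ^ 2 * hη

theorem icosahedralCubic_vertex_xy_eq_zero :
    icosahedralCubic ![0, t, 1] v ![ε * t, η, 0] = 0 := by
  apply icosahedralCubic_eq_zero_of_five_mul_sq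
  apply five_mul_sq_dotProduct_eq ht <;>
    simp only [dotProduct, Fin.sum_univ_three, cons_val_zero, cons_val_one, cons_val_two,
      head_cons, tail_cons]
  · linear_combination t ^ 2 * hε + hη
  · linear_combination t ^ 2 * hη

end Icosahedron

/-- With `a = (0,φ,1)` and `⟨v,a⟩ = 0`, the polynomial
`h(x) = ⟨v,x⟩(⟨a,x⟩² - (1/5)⟨a,a⟩⟨x,x⟩)` vanishes at all twelve vertices of the
standard icosahedron. -/
theorem stmt_4 :
    let φ : ℝ := (1 + Real.sqrt 5) / 2
    let a : Fin 3 → ℝ := ![0, φ, 1]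
    ∀ v : Fin 3 → ℝ, v ⬝ᵥ a = 0 →
      let h : (Fin 3 → ℝ) → ℝ :=
        fun x => (v ⬝ᵥ x) * ((a ⬝ᵥ x) ^ 2 - (1/5) * (a ⬝ᵥ a) * (x ⬝ᵥ x))
      ∀ ε η : ℝ, (ε = 1 ∨ ε = -1) → (η = 1 ∨ η = -1) →
        h ![0, ε * φ, η] = 0 ∧ h ![ε, 0, η * φ] = 0 ∧ h ![ε * φ, η, 0] = 0 := by
  intro φ a v hv h ε η hε hη
  have hε2 : ε ^ 2 = 1 := sq_eq_one_iff.mpr hε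
  have hη2 : η ^ 2 = 1 := sq_eq_one_iff.mpr hη
  exact ⟨icosahedralCubic_vertex_yz_eq_zero goldenRatio_sq hε2 hη2 hv,
    icosahedralCubic_vertex_xz_eq_zero goldenRatio_sq hε2 hη2,
    icosahedralCubic_vertex_xy_eq_zero goldenRatio_sq hε2 hη2⟩
end

section
/- There is no nonzero quadratic form Q on R^3 vanishing on all six axis directions a_1,…,a_6 of the standard icosahedron; i.e., if Q is a symmetric 3×3 real matrix with a_i^T Q a_i = 0 for i = 1,…,6, then Q = 0. -/
/-!
The six axes come in three pairs `t • e k ± e (k + 1)` (indices mod 3, `t = φ`). For a symmetric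
`Q`, the sum and the difference of `Q(u + v)` and `Q(u - v)` are `2 (Q u + Q v)` and `4 uᵀ Q v`,
so each pair forces `t² Q k k + Q (k+1) (k+1) = 0` and `Q k (k+1) = 0`. Going once around the
cycle of diagonal relations gives `(1 + t⁶) Q k k = 0`, hence the diagonal vanishes too.
-/

open Matrix

section
variable {n R : Type*} [Fintype n] [CommRing R]

theorem Matrix.IsSymm.dotProduct_mulVec_comm {Q : Matrix n n R} (hQ : Q.IsSymm) (u v : n → R) :
    u ⬝ᵥ Q *ᵥ v = v ⬝ᵥ Q *ᵥ u := by
  rw [dotProduct_mulVec, dotProduct_comm, ← mulVec_transpose, hQ.eq]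

theorem Matrix.IsSymm.dotProduct_mulVec_add_self_add_sub_self {Q : Matrix n n R} (hQ : Q.IsSymm)
    (u v : n → R) :
    (u + v) ⬝ᵥ Q *ᵥ (u + v) + (u - v) ⬝ᵥ Q *ᵥ (u - v) =
      2 * (u ⬝ᵥ Q *ᵥ u + v ⬝ᵥ Q *ᵥ v) := by
  simp only [mulVec_add, mulVec_sub, add_dotProduct, sub_dotProduct, dotProduct_add,
    dotProduct_sub, hQ.dotProduct_mulVec_comm v u]
  ring

theorem Matrix.IsSymm.dotProduct_mulVec_add_self_sub_sub_self {Q : Matrix n n R} (hQ : Q.IsSymm)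
    (u v : n → R) :
    (u + v) ⬝ᵥ Q *ᵥ (u + v) - (u - v) ⬝ᵥ Q *ᵥ (u - v) = 4 * (u ⬝ᵥ Q *ᵥ v) := by
  simp only [mulVec_add, mulVec_sub, add_dotProduct, sub_dotProduct, dotProduct_add,
    dotProduct_sub, hQ.dotProduct_mulVec_comm v u]
  ring

theorem Matrix.single_one_dotProduct_mulVec_single_one [DecidableEq n] (Q : Matrix n n R)
    (i j : n) :
    Pi.single i 1 ⬝ᵥ Q *ᵥ Pi.single j 1 = Q i j := by
  simp
end

section
variable {K : Type*} [Field K] [LinearOrder K] [IsStrictOrderedRing K]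

theorem Fin.eq_zero_of_sq_mul_add_succ_eq_zero {t : K} {d : Fin 3 → K}
    (h : ∀ k, t ^ 2 * d k + d (k + 1) = 0) (k : Fin 3) : d k = 0 := by
  have hk : k + 1 + 1 + 1 = k := by revert k; decide
  have h₀ := h k
  have h₁ := h (k + 1)
  have h₂ := h (k + 1 + 1)
  rw [hk] at h₂
  have : (1 + t ^ 6) * d k = 0 := by linear_combination h₂ - t ^ 2 * h₁ + t ^ 4 * h₀
  exact (mul_eq_zero.mp this).resolve_left (by positivity)

theorem Matrix.IsSymm.eq_zero_of_smul_single_add_sub_single_succ {t : K} (ht : t ≠ 0)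
    {Q : Matrix (Fin 3) (Fin 3) K} (hQ : Q.IsSymm)
    (hadd : ∀ k : Fin 3, (t • Pi.single k 1 + Pi.single (k + 1) 1) ⬝ᵥ
      Q *ᵥ (t • Pi.single k 1 + Pi.single (k + 1) 1) = 0)
    (hsub : ∀ k : Fin 3, (t • Pi.single k 1 - Pi.single (k + 1) 1) ⬝ᵥ
      Q *ᵥ (t • Pi.single k 1 - Pi.single (k + 1) 1) = 0) :
    Q = 0 := by
  have hdiag : ∀ k, t ^ 2 * Q k k + Q (k + 1) (k + 1) = 0 := fun k => by
    have := hQ.dotProduct_mulVec_add_self_add_sub_self (t • Pi.single k 1) (Pi.single (k + 1) 1)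
    simp only [hadd, hsub, smul_dotProduct, dotProduct_smul, mulVec_smul,
      single_one_dotProduct_mulVec_single_one, smul_eq_mul] at this
    linear_combination -this / 2
  have hoff : ∀ k, Q k (k + 1) = 0 := fun k => by
    have := hQ.dotProduct_mulVec_add_self_sub_sub_self (t • Pi.single k 1) (Pi.single (k + 1) 1)
    simp only [hadd, hsub, smul_dotProduct, single_one_dotProduct_mulVec_single_one,
      smul_eq_mul] at this
    simpa [ht] using this
  ext i j
  obtain rfl | rfl | rfl : i = j ∨ j = i + 1 ∨ i = j + 1 := by revert i j; decide
  · exact Fin.eq_zero_of_sq_mul_add_succ_eq_zero (d := fun k => Q k k) hdiag i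
  · exact hoff i
  · rw [hQ.apply]; exact hoff j

def icosahedronAxes (t : K) : Fin 6 → Fin 3 → K :=
  ![![0, t, 1], ![0, t, -1], ![1, 0, t], ![-1, 0, t], ![t, 1, 0], ![t, -1, 0]]

theorem Matrix.IsSymm.eq_zero_of_forall_icosahedronAxes {t : K} (ht : t ≠ 0)
    {Q : Matrix (Fin 3) (Fin 3) K} (hQ : Q.IsSymm)
    (h : ∀ i, icosahedronAxes t i ⬝ᵥ Q *ᵥ icosahedronAxes t i = 0) : Q = 0 := by
  have hzero : ∀ i v, icosahedronAxes t i = v → v ⬝ᵥ Q *ᵥ v = 0 := by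
    rintro i _ rfl
    exact h i
  refine hQ.eq_zero_of_smul_single_add_sub_single_succ ht
    (fun k => hzero (![4, 0, 2] k) _ ?_) (fun k => hzero (![5, 1, 3] k) _ ?_) <;>
  · fin_cases k <;> ext j <;> fin_cases j <;> simp [icosahedronAxes]
end

/-- If a symmetric 3×3 real matrix `Q` satisfies `aᵢᵀ Q aᵢ = 0` for all six axis vectors
of the standard icosahedron, then `Q = 0`. -/
theorem stmt_7 :
    let φ : ℝ := (1 + Real.sqrt 5) / 2
    let axes : Fin 6 → (Fin 3 → ℝ) :=
      ![![0, φ, 1], ![0, φ, -1], ![1, 0, φ], ![-1, 0, φ], ![φ, 1, 0], ![φ, -1, 0]]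
    ∀ Q : Matrix (Fin 3) (Fin 3) ℝ, Q.IsSymm →
      (∀ i : Fin 6, axes i ⬝ᵥ Q.mulVec (axes i) = 0) → Q = 0 := by
  intro φ axes Q hQ h
  exact hQ.eq_zero_of_forall_icosahedronAxes (by positivity) h
end

section
/- Let q_1,…,q_5 be the five transforms of q(x) = x_1 x_2 x_3 under the rotation group A_5 of the standard icosahedron, corresponding to the five triples of mutually orthogonal planes through the vertices. Then q_1 + q_2 + q_3 + q_4 + q_5 = 0. -/
open Matrix

/-- The five transforms of `q(x) = x₁x₂x₃` under the icosahedral rotation group `A₅`,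
corresponding to the five triples of mutually orthogonal planes through the vertices,
sum to zero.  Here `q₁ = x₁x₂x₃` corresponds to the coordinate planes, and the other
four triples of orthogonal plane-normals are `(1, sφ, tφ²), (φ, -sφ², t), (stφ², t, -sφ)`
for signs `s, t ∈ {±1}` (each normal of length `2φ`); these are the images of the
coordinate triple under rotations of the icosahedron, so each normalized product
`q_{s,t} = (n₁⬝x)(n₂⬝x)(n₃⬝x)/(2φ)³` is an `A₅`-transform of `q₁`. -/
theorem stmt_8 :
    let φ : ℝ := (1 + Real.sqrt 5) / 2
    let q : ℝ → ℝ → (Fin 3 → ℝ) → ℝ := fun s t x =>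
      ((![1, s*φ, t*φ^2] : Fin 3 → ℝ) ⬝ᵥ x) * ((![φ, -s*φ^2, t] : Fin 3 → ℝ) ⬝ᵥ x) *
        ((![s*t*φ^2, t, -s*φ] : Fin 3 → ℝ) ⬝ᵥ x) / (2*φ)^3
    ∀ x : Fin 3 → ℝ,
      x 0 * x 1 * x 2 + q 1 1 x + q 1 (-1) x + q (-1) 1 x + q (-1) (-1) x = 0 := by
  intro φ q x
  have hs : Real.sqrt 5 ^ 2 = 5 := Real.sq_sqrt (by norm_num)
  have hsge : Real.sqrt 5 ≥ 1 := by nlinarith [Real.sqrt_nonneg 5, hs]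
  have hφ : φ ≠ 0 := by simp only [φ]; nlinarith
  simp only [q, dotProduct, Fin.sum_univ_three, Matrix.cons_val_zero,
    Matrix.cons_val_one, Matrix.head_cons, Matrix.cons_val_two, Matrix.tail_cons]
  field_simp
  linear_combination (x 0 * x 1 * x 2 * (-19/16 - 9/8*Real.sqrt 5 - 5/4*Real.sqrt 5^2 - 3/8*Real.sqrt 5^3 - 1/16*Real.sqrt 5^4)) * hs
end

section
/- Consider the standard icosahedron rotated by angle θ about the x_3-axis, and the conic a(φ^4 x_1^2 + x_2^2 - φ^2 x_3^2) + b x_1 x_2 = 0 restricted to the sphere x_1^2+x_2^2+x_3^2 = 1+φ^2, with a ≠ 0. The eight vertices of the rotated icosahedron not lying in the plane x_3=0 all lie on the conic if and only if sin θ = 0 or tan θ = b/(a(1-φ^4)). -/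
open Matrix Real

/-!
Rotating a vertex `(0, ±φ, ±1)` or `(±1, 0, ±φ)` and substituting into the conic gives, after
`cos² θ = 1 - sin² θ`, a multiple (`-φ²` resp. `1`) of the single quantity
`sin θ · (a(1 - φ⁴) sin θ - b cos θ)`, whatever the signs. So all eight vertices lie on the
conic iff this product vanishes.
-/

noncomputable def rotZ (θ : ℝ) (v : Fin 3 → ℝ) : Fin 3 → ℝ :=
  ![v 0 * cos θ + v 1 * sin θ, -v 0 * sin θ + v 1 * cos θ, v 2]

def icosaConic (a b φ : ℝ) (p : Fin 3 → ℝ) : ℝ :=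
  a * (φ ^ 4 * p 0 ^ 2 + p 1 ^ 2 - φ ^ 2 * p 2 ^ 2) + b * p 0 * p 1

section

variable (a b φ θ : ℝ) {ε η : ℝ}

theorem icosaConic_rotZ_yz_vertex (hε : ε ^ 2 = 1) (hη : η ^ 2 = 1) :
    icosaConic a b φ (rotZ θ ![0, ε * φ, η]) =
      -φ ^ 2 * (sin θ * (a * (1 - φ ^ 4) * sin θ - b * cos θ)) := by
  simp only [icosaConic, rotZ, cons_val_zero, cons_val_one, cons_val_two, head_cons, tail_cons]
  linear_combination (a * φ ^ 6 * sin θ ^ 2 + a * φ ^ 2 * cos θ ^ 2 + b * φ ^ 2 * sin θ * cos θ) * hε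
    - a * φ ^ 2 * hη + a * φ ^ 2 * sin_sq_add_cos_sq θ

theorem icosaConic_rotZ_xz_vertex (hε : ε ^ 2 = 1) (hη : η ^ 2 = 1) :
    icosaConic a b φ (rotZ θ ![ε, 0, η * φ]) =
      sin θ * (a * (1 - φ ^ 4) * sin θ - b * cos θ) := by
  simp only [icosaConic, rotZ, cons_val_zero, cons_val_one, cons_val_two, head_cons, tail_cons]
  linear_combination (a * φ ^ 4 * cos θ ^ 2 + a * sin θ ^ 2 - b * sin θ * cos θ) * hε
    - a * φ ^ 4 * hη + a * φ ^ 4 * sin_sq_add_cos_sq θ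

end

theorem stmt_18_general (a b θ : ℝ) :
    let φ : ℝ := (1 + Real.sqrt 5) / 2
    let rot : (Fin 3 → ℝ) → (Fin 3 → ℝ) := fun v =>
      ![v 0 * Real.cos θ + v 1 * Real.sin θ, -v 0 * Real.sin θ + v 1 * Real.cos θ, v 2]
    let C : (Fin 3 → ℝ) → ℝ := fun p =>
      a * (φ^4 * (p 0)^2 + (p 1)^2 - φ^2 * (p 2)^2) + b * (p 0) * (p 1)
    (∀ ε η : ℝ, (ε = 1 ∨ ε = -1) → (η = 1 ∨ η = -1) →
        C (rot ![0, ε * φ, η]) = 0 ∧ C (rot ![ε, 0, η * φ]) = 0)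
      ↔ (Real.sin θ = 0 ∨ a * (1 - φ^4) * Real.sin θ = b * Real.cos θ) := by
  intro φ rot C
  change (∀ ε η : ℝ, (ε = 1 ∨ ε = -1) → (η = 1 ∨ η = -1) →
      icosaConic a b φ (rotZ θ ![0, ε * φ, η]) = 0 ∧ icosaConic a b φ (rotZ θ ![ε, 0, η * φ]) = 0)
    ↔ _
  have sq_eq_one {x : ℝ} (hx : x = 1 ∨ x = -1) : x ^ 2 = 1 := by
    rcases hx with rfl | rfl <;> norm_num
  rw [← sub_eq_zero (a := a * (1 - φ ^ 4) * sin θ), ← mul_eq_zero]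
  constructor
  · intro h
    simpa only [icosaConic_rotZ_xz_vertex a b φ θ (one_pow 2) (one_pow 2)]
      using (h 1 1 (.inl rfl) (.inl rfl)).2
  · intro h ε η hε hη
    rw [icosaConic_rotZ_yz_vertex a b φ θ (sq_eq_one hε) (sq_eq_one hη),
      icosaConic_rotZ_xz_vertex a b φ θ (sq_eq_one hε) (sq_eq_one hη), h]
    simp

/-- Rotate the standard icosahedron by angle `θ` about the `x₃`-axis (so that the
vertex `(0,φ,1)` moves to `(φ sin θ, φ cos θ, 1)`).  Given the conic
`a(φ⁴x₁² + x₂² - φ²x₃²) + b x₁x₂ = 0` with `a ≠ 0`, the eight rotated vertices not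
lying in the plane `x₃ = 0` all lie on the conic iff `sin θ = 0` or
`tan θ = b/(a(1-φ⁴))`, the latter written in the cleared form
`a(1-φ⁴) sin θ = b cos θ`. -/
theorem stmt_18 (a b θ : ℝ) (ha : a ≠ 0) :
    let φ : ℝ := (1 + Real.sqrt 5) / 2
    let rot : (Fin 3 → ℝ) → (Fin 3 → ℝ) := fun v =>
      ![v 0 * Real.cos θ + v 1 * Real.sin θ, -v 0 * Real.sin θ + v 1 * Real.cos θ, v 2]
    let C : (Fin 3 → ℝ) → ℝ := fun p =>
      a * (φ^4 * (p 0)^2 + (p 1)^2 - φ^2 * (p 2)^2) + b * (p 0) * (p 1)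
    (∀ ε η : ℝ, (ε = 1 ∨ ε = -1) → (η = 1 ∨ η = -1) →
        C (rot ![0, ε * φ, η]) = 0 ∧ C (rot ![ε, 0, η * φ]) = 0)
      ↔ (Real.sin θ = 0 ∨ a * (1 - φ^4) * Real.sin θ = b * Real.cos θ) :=
  stmt_18_general a b θ
end
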